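/- arXiv:2103.10672 — 5 statements merged into one kernel-verified Lean document; each statement's English description precedes it below -/
import Mathlib

section
/- Let α : [a,b] → ℝ be non-decreasing, β : [a,b] → ℝ non-negative, and y : [a,b] → ℝ continuous and non-negative. If y(t) ≤ α(t) + ∫_a^t ∫_a^s β(τ) y(τ) dτ ds for all t ∈ [a,b], then y(t) ≤ α(t) · exp(∫_a^t ∫_a^s β(τ) dτ ds) for all t ∈ [a,b]. -/
/-!
Fix `t` and freeze `α` at its largest value `α t` on `[a, t]`. The right-hand side
`v(s) = α t + ∫_a^s f`, with `f(s) = ∫_a^s β y`, dominates `y` and is non-decreasing, so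
`v' = f ≤ (∫_a^s β) · v`. The linear differential inequality `v' ≤ g v` integrates to
`v(t) ≤ v(a) · exp (∫_a^t g)`, because `v · exp (-∫ g)` has non-positive derivative.
-/

open MeasureTheory Set Real

section Primitive

variable {E : Type*} [NormedAddCommGroup E] [NormedSpace ℝ E] {a b : ℝ}

theorem continuousOn_primitive_of_integrableOn {f : ℝ → E} (hab : a ≤ b)
    (hf : IntegrableOn f (Icc a b)) :
    ContinuousOn (fun t => ∫ s in a..t, f s) (Icc a b) := by
  rw [← uIcc_of_le hab] at hf ⊢
  exact intervalIntegral.continuousOn_primitive_interval hf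

theorem hasDerivAt_primitive_of_continuousOn [CompleteSpace E] {f : ℝ → E}
    (hf : ContinuousOn f (Icc a b)) {x : ℝ} (hx : x ∈ Ioo a b) :
    HasDerivAt (fun t => ∫ s in a..t, f s) (f x) x :=
  intervalIntegral.integral_hasDerivAt_right
    ((hf.mono (Icc_subset_Icc le_rfl hx.2.le)).intervalIntegrable_of_Icc hx.1.le)
    ((hf.mono Ioo_subset_Icc_self).stronglyMeasurableAtFilter isOpen_Ioo x hx)
    (hf.continuousAt (Icc_mem_nhds hx.1 hx.2))

theorem monotoneOn_primitive_of_nonneg {f : ℝ → ℝ} (hf : IntegrableOn f (Icc a b))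
    (hf0 : ∀ x ∈ Icc a b, 0 ≤ f x) : MonotoneOn (fun t => ∫ s in a..t, f s) (Icc a b) := by
  intro s hs t ht hst
  refine intervalIntegral.integral_mono_interval le_rfl hs.1 hst ?_
    ((intervalIntegrable_iff_integrableOn_Icc_of_le (hs.1.trans hst)).2
      (hf.mono_set (Icc_subset_Icc le_rfl ht.2)))
  exact (ae_restrict_iff' measurableSet_Ioc).2
    (Filter.Eventually.of_forall fun x hx => hf0 x ⟨hx.1.le, hx.2.trans ht.2⟩)

end Primitive

theorem integral_mul_le_integral_mul_of_le {β y : ℝ → ℝ} {a b c : ℝ} (hab : a ≤ b)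
    (hβ : ∀ t ∈ Icc a b, 0 ≤ β t) (hβint : IntervalIntegrable β volume a b)
    (hβyint : IntervalIntegrable (fun t => β t * y t) volume a b)
    (hy : ∀ t ∈ Icc a b, y t ≤ c) :
    ∫ t in a..b, β t * y t ≤ (∫ t in a..b, β t) * c := by
  rw [← intervalIntegral.integral_mul_const]
  exact intervalIntegral.integral_mono_on hab hβyint (hβint.mul_const c)
    fun t ht => mul_le_mul_of_nonneg_left (hy t ht) (hβ t ht)

theorem le_mul_exp_of_hasDerivAt_le_mul {v v' G g : ℝ → ℝ} {a b : ℝ} (hab : a ≤ b)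
    (hv : ContinuousOn v (Icc a b)) (hG : ContinuousOn G (Icc a b))
    (hv' : ∀ x ∈ Ioo a b, HasDerivAt v (v' x) x) (hG' : ∀ x ∈ Ioo a b, HasDerivAt G (g x) x)
    (hle : ∀ x ∈ Ioo a b, v' x ≤ g x * v x) :
    v b ≤ v a * exp (G b - G a) := by
  have hanti : AntitoneOn (fun t => v t * exp (-G t)) (Icc a b) := by
    refine antitoneOn_of_hasDerivWithinAt_nonpos (convex_Icc a b) (hv.mul hG.neg.rexp)
      (fun x hx => ?_) (fun x hx => ?_)
      (f' := fun x => v' x * exp (-G x) + v x * (exp (-G x) * -g x))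
    · rw [interior_Icc] at hx ⊢
      exact ((hv' x hx).mul (hG' x hx).neg.exp).hasDerivWithinAt
    · rw [interior_Icc] at hx
      nlinarith [hle x hx, exp_pos (-G x)]
  have hdecay := hanti (left_mem_Icc.2 hab) (right_mem_Icc.2 hab) hab
  calc v b = v b * exp (-G b) * exp (G b) := by rw [mul_assoc, ← exp_add]; simp
    _ ≤ v a * exp (-G a) * exp (G b) := by gcongr
    _ = v a * exp (G b - G a) := by rw [mul_assoc, ← exp_add]; ring_nf

theorem le_const_mul_exp_of_le_const_add_iterated_integral {β y : ℝ → ℝ} {a b : ℝ} (A : ℝ)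
    (hab : a ≤ b) (hβ : ∀ t ∈ Icc a b, 0 ≤ β t) (hy : ContinuousOn y (Icc a b))
    (hy0 : ∀ t ∈ Icc a b, 0 ≤ y t) (hβint : IntegrableOn β (Icc a b))
    (h : ∀ t ∈ Icc a b, y t ≤ A + ∫ s in a..t, ∫ τ in a..s, β τ * y τ) :
    y b ≤ A * exp (∫ s in a..b, ∫ τ in a..s, β τ) := by
  set f := fun s => ∫ τ in a..s, β τ * y τ
  set B := fun s => ∫ τ in a..s, β τ
  set v := fun t => A + ∫ s in a..t, f s
  have hβy : IntegrableOn (fun τ => β τ * y τ) (Icc a b) :=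
    hβint.mul_continuousOn hy isCompact_Icc
  have hf : ContinuousOn f (Icc a b) := continuousOn_primitive_of_integrableOn hab hβy
  have hB : ContinuousOn B (Icc a b) := continuousOn_primitive_of_integrableOn hab hβint
  have hf0 : ∀ s ∈ Icc a b, 0 ≤ f s := fun s hs => intervalIntegral.integral_nonneg hs.1
    fun τ hτ => mul_nonneg (hβ τ ⟨hτ.1, hτ.2.trans hs.2⟩) (hy0 τ ⟨hτ.1, hτ.2.trans hs.2⟩)
  have hv_mono : MonotoneOn v (Icc a b) :=
    (monotoneOn_primitive_of_nonneg hf.integrableOn_Icc hf0).const_add A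
  have hfv : ∀ x ∈ Ioo a b, f x ≤ B x * v x := by
    intro x hx
    have hsub : Icc a x ⊆ Icc a b := Icc_subset_Icc le_rfl hx.2.le
    refine integral_mul_le_integral_mul_of_le hx.1.le (fun τ hτ => hβ τ (hsub hτ))
      ((intervalIntegrable_iff_integrableOn_Icc_of_le hx.1.le).2 (hβint.mono_set hsub))
      ((intervalIntegrable_iff_integrableOn_Icc_of_le hx.1.le).2 (hβy.mono_set hsub))
      fun τ hτ => (h τ (hsub hτ)).trans ?_
    exact hv_mono (hsub hτ) (Ioo_subset_Icc_self hx) hτ.2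
  have hv_bound := le_mul_exp_of_hasDerivAt_le_mul (v := v) hab
    (continuousOn_const.add (continuousOn_primitive_of_integrableOn hab hf.integrableOn_Icc))
    (continuousOn_primitive_of_integrableOn hab hB.integrableOn_Icc)
    (fun x hx => (hasDerivAt_primitive_of_continuousOn hf hx).const_add A)
    (fun x hx => hasDerivAt_primitive_of_continuousOn hB hx) hfv
  simp only [v, intervalIntegral.integral_same, add_zero, sub_zero] at hv_bound
  exact (h b (right_mem_Icc.2 hab)).trans hv_bound

theorem gronwall_iterated_general
    (a b : ℝ) (α β y : ℝ → ℝ)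
    (hα : MonotoneOn α (Set.Icc a b))
    (hβ : ∀ t ∈ Set.Icc a b, 0 ≤ β t)
    (hy : ContinuousOn y (Set.Icc a b))
    (hy0 : ∀ t ∈ Set.Icc a b, 0 ≤ y t)
    (hβint : IntegrableOn β (Set.Icc a b))
    (h : ∀ t ∈ Set.Icc a b, y t ≤ α t + ∫ s in a..t, ∫ τ in a..s, β τ * y τ) :
    ∀ t ∈ Set.Icc a b,
      y t ≤ α t * Real.exp (∫ s in a..t, ∫ τ in a..s, β τ) := by
  intro t ht
  have hsub : Icc a t ⊆ Icc a b := Icc_subset_Icc le_rfl ht.2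
  refine le_const_mul_exp_of_le_const_add_iterated_integral (α t) ht.1
    (fun s hs => hβ s (hsub hs)) (hy.mono hsub) (fun s hs => hy0 s (hsub hs))
    (hβint.mono_set hsub) fun s hs => (h s (hsub hs)).trans ?_
  gcongr
  exact hα (hsub hs) ht hs.2

theorem gronwall_iterated
    (a b : ℝ) (hab : a ≤ b) (α β y : ℝ → ℝ)
    (hα : MonotoneOn α (Set.Icc a b))
    (hβ : ∀ t ∈ Set.Icc a b, 0 ≤ β t)
    (hy : ContinuousOn y (Set.Icc a b))
    (hy0 : ∀ t ∈ Set.Icc a b, 0 ≤ y t)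
    (hαint : IntegrableOn α (Set.Icc a b))
    (hβint : IntegrableOn β (Set.Icc a b))
    (h : ∀ t ∈ Set.Icc a b, y t ≤ α t + ∫ s in a..t, ∫ τ in a..s, β τ * y τ) :
    ∀ t ∈ Set.Icc a b,
      y t ≤ α t * Real.exp (∫ s in a..t, ∫ τ in a..s, β τ) :=
  gronwall_iterated_general a b α β y hα hβ hy hy0 hβint h
end

section
/- Let ω : I → ℝ³ be C² with ω(t) ≠ 0 and ω'(t) ≠ 0 for all t, satisfying ω'(t) = S(t)ω(t) and ω''(t) = -P(t)ω(t) for continuous matrix-valued functions S (symmetric) and P. Let ξ = ω/|ω|, ζ = Sω/|Sω|, α = ⟨ξ, Sξ⟩, ρ = ⟨ξ, Pξ⟩. Then (d²/dt²) log|ω(t)| = |S(t)ξ(t)|² - 2α(t)² - ρ(t). -/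
open Filter Topology
open scoped RealInnerProductSpace

/-!
Since `log ‖f‖ = log (‖f‖ ^ 2) / 2`, its derivative is `⟪f, f'⟫ / ‖f‖ ^ 2`, and the quotient
rule gives the second derivative in terms of `ξ = f / ‖f‖`, `f' / ‖f‖` and `f'' / ‖f‖`.
Along the vorticity dynamics `f' / ‖f‖ = S ξ` and `f'' / ‖f‖ = -P ξ`.
-/

section LogNorm

variable {E : Type*} [NormedAddCommGroup E] [InnerProductSpace ℝ E] {f : ℝ → E} {t : ℝ}

theorem HasDerivAt.log_norm {f' : E} (hf : HasDerivAt f f' t) (h0 : f t ≠ 0) :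
    HasDerivAt (fun s => Real.log ‖f s‖) (⟪f t, f'⟫ / ‖f t‖ ^ 2) t := by
  have hsq := (hf.norm_sq.log (pow_ne_zero 2 (norm_ne_zero_iff.2 h0))).div_const 2
  have hlog : (fun s => Real.log ‖f s‖) = fun s => Real.log (‖f s‖ ^ 2) / 2 := by
    funext s
    rw [Real.log_pow]
    push_cast
    ring
  rw [hlog]
  exact hsq.congr_deriv (by ring)

theorem deriv_deriv_log_norm {f' : ℝ → E} {f'' : E}
    (hf : ∀ᶠ s in 𝓝 t, HasDerivAt f (f' s) s) (hf' : HasDerivAt f' f'' t) (h0 : f t ≠ 0) :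
    deriv (deriv fun s => Real.log ‖f s‖) t
      = ‖‖f t‖⁻¹ • f' t‖ ^ 2 - 2 * ⟪‖f t‖⁻¹ • f t, ‖f t‖⁻¹ • f' t⟫ ^ 2
        + ⟪‖f t‖⁻¹ • f t, ‖f t‖⁻¹ • f''⟫ := by
  have hft : HasDerivAt f (f' t) t := hf.self_of_nhds
  have hne : ∀ᶠ s in 𝓝 t, f s ≠ 0 := hft.continuousAt.eventually_ne h0
  have hderiv : deriv (fun s => Real.log ‖f s‖) =ᶠ[𝓝 t] fun s => ⟪f s, f' s⟫ / ‖f s‖ ^ 2 := by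
    filter_upwards [hf, hne] with s hs hs0 using (hs.log_norm hs0).deriv
  have hquot : HasDerivAt (fun s => ⟪f s, f' s⟫ / ‖f s‖ ^ 2)
      (((⟪f t, f''⟫ + ⟪f' t, f' t⟫) * ‖f t‖ ^ 2 - ⟪f t, f' t⟫ * (2 * ⟪f t, f' t⟫)) / (‖f t‖ ^ 2) ^ 2)
      t :=
    (hft.inner ℝ hf').div hft.norm_sq (pow_ne_zero 2 (norm_ne_zero_iff.2 h0))
  rw [hderiv.deriv_eq, hquot.deriv, norm_smul, real_inner_smul_left, real_inner_smul_right,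
    real_inner_smul_left, real_inner_smul_right, real_inner_comm (f' t), real_inner_self_eq_norm_sq,
    norm_inv, norm_norm]
  have hn : ‖f t‖ ≠ 0 := norm_ne_zero_iff.2 h0
  field_simp
  ring

end LogNorm

theorem second_log_deriv_vorticity_general
    (I : Set ℝ) (hI : IsOpen I)
    (ω : ℝ → EuclideanSpace ℝ (Fin 3))
    (S P : ℝ → Matrix (Fin 3) (Fin 3) ℝ)
    (hω : ContDiffOn ℝ 2 ω I)
    (hω0 : ∀ t ∈ I, ω t ≠ 0)
    (hODE1 : ∀ t ∈ I, deriv ω t = Matrix.toEuclideanLin (S t) (ω t))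
    (hODE2 : ∀ t ∈ I, deriv (deriv ω) t = -(Matrix.toEuclideanLin (P t) (ω t))) :
    ∀ t ∈ I,
      deriv (deriv (fun s => Real.log ‖ω s‖)) t
        = ‖Matrix.toEuclideanLin (S t) ((‖ω t‖)⁻¹ • ω t)‖ ^ 2
          - 2 * (⟪(‖ω t‖)⁻¹ • ω t, Matrix.toEuclideanLin (S t) ((‖ω t‖)⁻¹ • ω t)⟫) ^ 2
          - ⟪(‖ω t‖)⁻¹ • ω t, Matrix.toEuclideanLin (P t) ((‖ω t‖)⁻¹ • ω t)⟫ := by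
  intro t ht
  have hω' : ∀ᶠ s in 𝓝 t, HasDerivAt ω (deriv ω s) s :=
    eventually_of_mem (hI.mem_nhds ht) fun s hs =>
      ((hω.differentiableOn (by norm_num)).differentiableAt (hI.mem_nhds hs)).hasDerivAt
  have hω'' : HasDerivAt (deriv ω) (deriv (deriv ω) t) t :=
    (((hω.deriv_of_isOpen hI (m := 1) (by norm_num)).differentiableOn one_ne_zero).differentiableAt
      (hI.mem_nhds ht)).hasDerivAt
  have hSξ : ‖ω t‖⁻¹ • deriv ω t = Matrix.toEuclideanLin (S t) (‖ω t‖⁻¹ • ω t) := by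
    rw [map_smul, hODE1 t ht]
  have hPξ : ‖ω t‖⁻¹ • deriv (deriv ω) t = -Matrix.toEuclideanLin (P t) (‖ω t‖⁻¹ • ω t) := by
    rw [map_smul, hODE2 t ht, smul_neg]
  rw [deriv_deriv_log_norm hω' hω'' (hω0 t ht), hSξ, hPξ, inner_neg_right]
  ring

theorem second_log_deriv_vorticity
    (I : Set ℝ) (hI : IsOpen I)
    (ω : ℝ → EuclideanSpace ℝ (Fin 3))
    (S P : ℝ → Matrix (Fin 3) (Fin 3) ℝ)
    (hω : ContDiffOn ℝ 2 ω I)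
    (hS : ContinuousOn S I) (hP : ContinuousOn P I)
    (hSsymm : ∀ t ∈ I, (S t).IsSymm)
    (hω0 : ∀ t ∈ I, ω t ≠ 0)
    (hω'0 : ∀ t ∈ I, deriv ω t ≠ 0)
    (hODE1 : ∀ t ∈ I, deriv ω t = Matrix.toEuclideanLin (S t) (ω t))
    (hODE2 : ∀ t ∈ I, deriv (deriv ω) t = -(Matrix.toEuclideanLin (P t) (ω t))) :
    ∀ t ∈ I,
      deriv (deriv (fun s => Real.log ‖ω s‖)) t
        = ‖Matrix.toEuclideanLin (S t) ((‖ω t‖)⁻¹ • ω t)‖ ^ 2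
          - 2 * (⟪(‖ω t‖)⁻¹ • ω t, Matrix.toEuclideanLin (S t) ((‖ω t‖)⁻¹ • ω t)⟫) ^ 2
          - ⟪(‖ω t‖)⁻¹ • ω t, Matrix.toEuclideanLin (P t) ((‖ω t‖)⁻¹ • ω t)⟫ :=
  second_log_deriv_vorticity_general I hI ω S P hω hω0 hODE1 hODE2
end

section
/- Let ω : I → ℝ³ be C² with ω(t) ≠ 0, ω'(t) ≠ 0 for all t, and ω''(t) = -P(t)ω(t). Let ξ = ω/|ω| and ζ = ω'/|ω'|. Then ((d/dt)|ω'|)² + (|ζ'| · (d/dt)|ω|)² + (|ζ'| · |ξ'| · |ω|)² = |Pω|², and consequently (d/dt)|ω'| + |ζ'| · (d/dt)|ω| + |ζ'| · |ξ'| · |ω| ≤ √3 |Pω|. -/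
/-!
Write a nonvanishing curve as `v = ‖v‖ • u` with `u = v / ‖v‖` a unit curve. Since `‖u‖ ≡ 1`,
`u'` is orthogonal to `u`, so `v' = ‖v‖' • u + ‖v‖ • u'` is an orthogonal splitting and
`‖v'‖² = (‖v‖')² + (‖u'‖ ‖v‖)²`. Applying this to `ω'` (whose derivative has norm `‖Pω‖`) and
then to `ω` gives the three-term identity; the inequality is Cauchy–Schwarz in `ℝ³`.
-/

open Topology RealInnerProductSpace

section UnitCurve

variable {F : Type*} [NormedAddCommGroup F] [InnerProductSpace ℝ F]

theorem inner_deriv_eq_zero_of_norm_eventuallyEq_const {u : ℝ → F} {t c : ℝ}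
    (hu : DifferentiableAt ℝ u t) (hc : ∀ᶠ s in 𝓝 t, ‖u s‖ = c) :
    ⟪u t, deriv u t⟫ = 0 := by
  have hsq : HasDerivAt (‖u ·‖ ^ 2) 0 t :=
    (hasDerivAt_const t (c ^ 2)).congr_of_eventuallyEq (hc.mono fun s hs => by simp [hs])
  have h := hu.hasDerivAt.norm_sq.unique hsq
  linarith

variable {v : ℝ → F} {t : ℝ}

theorem inner_inv_norm_smul_deriv_eq_zero (hv : DifferentiableAt ℝ v t) (h0 : v t ≠ 0) :
    ⟪‖v t‖⁻¹ • v t, deriv (fun s => ‖v s‖⁻¹ • v s) t⟫ = 0 :=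
  inner_deriv_eq_zero_of_norm_eventuallyEq_const ((hv.norm ℝ h0).inv (norm_ne_zero_iff.2 h0)
    |>.smul hv) ((hv.continuousAt.eventually_ne h0).mono fun _ hs => norm_smul_inv_norm hs)

theorem deriv_eq_norm_smul_deriv_inv_norm_smul_add (hv : DifferentiableAt ℝ v t)
    (h0 : v t ≠ 0) :
    deriv v t = ‖v t‖ • deriv (fun s => ‖v s‖⁻¹ • v s) t
      + deriv (‖v ·‖) t • (‖v t‖⁻¹ • v t) := by
  have hn := hv.norm ℝ h0
  have hpolar : (fun s => ‖v s‖ • ‖v s‖⁻¹ • v s) =ᶠ[𝓝 t] v :=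
    (hv.continuousAt.eventually_ne h0).mono fun _ hs => smul_inv_smul₀ (norm_ne_zero_iff.2 hs) _
  rw [← hpolar.deriv_eq]
  exact (hn.hasDerivAt.smul ((hn.inv (norm_ne_zero_iff.2 h0)).smul hv).hasDerivAt).deriv

theorem sq_deriv_norm_add_sq_norm_deriv_inv_norm_smul_mul_norm (hv : DifferentiableAt ℝ v t)
    (h0 : v t ≠ 0) :
    deriv (‖v ·‖) t ^ 2 + (‖deriv (fun s => ‖v s‖⁻¹ • v s) t‖ * ‖v t‖) ^ 2
      = ‖deriv v t‖ ^ 2 := by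
  have hunit : ‖‖v t‖⁻¹ • v t‖ = 1 := norm_smul_inv_norm h0
  rw [deriv_eq_norm_smul_deriv_inv_norm_smul_add hv h0, norm_add_sq_real, inner_smul_left,
    inner_smul_right, real_inner_comm, inner_inv_norm_smul_deriv_eq_zero hv h0,
    norm_smul, norm_smul, hunit, norm_norm, Real.norm_eq_abs, mul_one, sq_abs]
  simp only [conj_trivial, mul_zero]
  ring

end UnitCurve

theorem add_add_le_sqrt_three_mul {a b c N : ℝ} (h : a ^ 2 + b ^ 2 + c ^ 2 = N ^ 2)
    (hN : 0 ≤ N) : a + b + c ≤ √3 * N := by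
  rw [← Real.sqrt_sq hN, ← Real.sqrt_mul (by norm_num)]
  refine Real.le_sqrt_of_sq_le ?_
  nlinarith [sq_nonneg (a - b), sq_nonneg (a - c), sq_nonneg (b - c)]

theorem three_term_pythagoras_and_inequality_general
    (I : Set ℝ) (hI : IsOpen I)
    (ω : ℝ → EuclideanSpace ℝ (Fin 3))
    (P : ℝ → Matrix (Fin 3) (Fin 3) ℝ)
    (hω : ContDiffOn ℝ 2 ω I)
    (hω0 : ∀ t ∈ I, ω t ≠ 0)
    (hω'0 : ∀ t ∈ I, deriv ω t ≠ 0)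
    (hODE : ∀ t ∈ I, deriv (deriv ω) t = -(Matrix.toEuclideanLin (P t) (ω t))) :
    ∀ t ∈ I,
      ((deriv (fun s => ‖deriv ω s‖) t) ^ 2
        + (‖deriv (fun s => (‖deriv ω s‖)⁻¹ • deriv ω s) t‖
            * deriv (fun s => ‖ω s‖) t) ^ 2
        + (‖deriv (fun s => (‖deriv ω s‖)⁻¹ • deriv ω s) t‖
            * ‖deriv (fun s => (‖ω s‖)⁻¹ • ω s) t‖ * ‖ω t‖) ^ 2
        = ‖Matrix.toEuclideanLin (P t) (ω t)‖ ^ 2) ∧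
      (deriv (fun s => ‖deriv ω s‖) t
        + ‖deriv (fun s => (‖deriv ω s‖)⁻¹ • deriv ω s) t‖
            * deriv (fun s => ‖ω s‖) t
        + ‖deriv (fun s => (‖deriv ω s‖)⁻¹ • deriv ω s) t‖
            * ‖deriv (fun s => (‖ω s‖)⁻¹ • ω s) t‖ * ‖ω t‖
        ≤ Real.sqrt 3 * ‖Matrix.toEuclideanLin (P t) (ω t)‖) := by
  intro t ht
  have hω_diff : DifferentiableAt ℝ ω t :=
    (hω.contDiffAt (hI.mem_nhds ht)).differentiableAt (by norm_num)
  have hω'_diff : DifferentiableAt ℝ (deriv ω) t :=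
    ((hω.deriv_of_isOpen (m := 1) hI (by norm_num)).contDiffAt
      (hI.mem_nhds ht)).differentiableAt one_ne_zero
  have hsplit_ω := sq_deriv_norm_add_sq_norm_deriv_inv_norm_smul_mul_norm hω_diff (hω0 t ht)
  have hsplit_ω' := sq_deriv_norm_add_sq_norm_deriv_inv_norm_smul_mul_norm hω'_diff (hω'0 t ht)
  rw [hODE t ht, norm_neg] at hsplit_ω'
  refine (fun hsum => ⟨hsum, add_add_le_sqrt_three_mul hsum (norm_nonneg _)⟩) ?_
  rw [← hsplit_ω', mul_pow _ ‖deriv ω t‖, ← hsplit_ω]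
  ring

theorem three_term_pythagoras_and_inequality
    (I : Set ℝ) (hI : IsOpen I)
    (ω : ℝ → EuclideanSpace ℝ (Fin 3))
    (P : ℝ → Matrix (Fin 3) (Fin 3) ℝ)
    (hω : ContDiffOn ℝ 2 ω I)
    (hP : ContinuousOn P I)
    (hω0 : ∀ t ∈ I, ω t ≠ 0)
    (hω'0 : ∀ t ∈ I, deriv ω t ≠ 0)
    (hODE : ∀ t ∈ I, deriv (deriv ω) t = -(Matrix.toEuclideanLin (P t) (ω t))) :
    ∀ t ∈ I,
      ((deriv (fun s => ‖deriv ω s‖) t) ^ 2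
        + (‖deriv (fun s => (‖deriv ω s‖)⁻¹ • deriv ω s) t‖
            * deriv (fun s => ‖ω s‖) t) ^ 2
        + (‖deriv (fun s => (‖deriv ω s‖)⁻¹ • deriv ω s) t‖
            * ‖deriv (fun s => (‖ω s‖)⁻¹ • ω s) t‖ * ‖ω t‖) ^ 2
        = ‖Matrix.toEuclideanLin (P t) (ω t)‖ ^ 2) ∧
      (deriv (fun s => ‖deriv ω s‖) t
        + ‖deriv (fun s => (‖deriv ω s‖)⁻¹ • deriv ω s) t‖
            * deriv (fun s => ‖ω s‖) t
        + ‖deriv (fun s => (‖deriv ω s‖)⁻¹ • deriv ω s) t‖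
            * ‖deriv (fun s => (‖ω s‖)⁻¹ • ω s) t‖ * ‖ω t‖
        ≤ Real.sqrt 3 * ‖Matrix.toEuclideanLin (P t) (ω t)‖) :=
  three_term_pythagoras_and_inequality_general I hI ω P hω hω0 hω'0 hODE
end

section
/- Let ω : I → ℝ³ be C² with ω ≠ 0, ω' ≠ 0, ζ' ≠ 0, satisfying ω''(t) = -P(t)ω(t), with ξ = ω/|ω|, ζ = ω'/|ω'|. Then ⟨ζ'/|ζ'|, P ξ⟩ = -(|ω'|/|ω|) |ζ'|. -/
open Filter Topology
open scoped RealInnerProductSpace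

/-!
Write `ζ = ω' / |ω'|`. Differentiating `ω' = |ω'| ζ` gives `ω'' = |ω'|' ζ + |ω'| ζ'`, and `ζ' ⟂ ζ`
because `ζ` has unit length, so `⟨ζ', ω''⟩ = |ω'| |ζ'|²`. Since `P ξ = -ω'' / |ω|`, dividing by
`|ζ'|` gives the claim; when `ζ' = 0` or `ω = 0` both sides vanish, since `0⁻¹ = 0`.
-/

variable {E : Type*} [NormedAddCommGroup E] [InnerProductSpace ℝ E]

theorem HasDerivAt.inner_eq_zero_of_eventually_norm_eq {u : ℝ → E} {u' : E} {t c : ℝ}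
    (hu : HasDerivAt u u' t) (hc : ∀ᶠ s in 𝓝 t, ‖u s‖ = c) : ⟪u t, u'⟫ = 0 := by
  have hconst : HasDerivAt (‖u ·‖ ^ 2) 0 t :=
    (hasDerivAt_const t (c ^ 2)).congr_of_eventuallyEq (by filter_upwards [hc] with s hs; rw [hs])
  have := hu.norm_sq.unique hconst
  linarith

theorem inner_deriv_inv_norm_smul_deriv {f : ℝ → E} {t : ℝ} (hf : DifferentiableAt ℝ f t)
    (hf0 : ∀ᶠ s in 𝓝 t, f s ≠ 0) :
    ⟪deriv (fun s => ‖f s‖⁻¹ • f s) t, deriv f t⟫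
      = ‖f t‖ * ‖deriv (fun s => ‖f s‖⁻¹ • f s) t‖ ^ 2 := by
  set ζ : ℝ → E := fun s => ‖f s‖⁻¹ • f s
  have hnorm : DifferentiableAt ℝ (‖f ·‖) t := hf.norm ℝ hf0.self_of_nhds
  have hζ : HasDerivAt ζ (deriv ζ t) t :=
    ((hnorm.inv (norm_ne_zero_iff.2 hf0.self_of_nhds)).smul hf).hasDerivAt
  have hunit : ∀ᶠ s in 𝓝 t, ‖ζ s‖ = 1 := by
    filter_upwards [hf0] with s hs
    exact norm_smul_inv_norm hs
  have hζ_perp : ⟪deriv ζ t, ζ t⟫ = 0 := by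
    rw [real_inner_comm]; exact hζ.inner_eq_zero_of_eventually_norm_eq hunit
  have hf_eq : (fun s => ‖f s‖ • ζ s) =ᶠ[𝓝 t] f := by
    filter_upwards [hf0] with s hs
    exact smul_inv_smul₀ (norm_ne_zero_iff.2 hs) (f s)
  have hf' : deriv f t = ‖f t‖ • deriv ζ t + deriv (‖f ·‖) t • ζ t :=
    ((hnorm.hasDerivAt.smul hζ).congr_of_eventuallyEq hf_eq.symm).deriv
  rw [hf', inner_add_right, real_inner_smul_right, real_inner_smul_right, hζ_perp,
    real_inner_self_eq_norm_sq]
  ring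

theorem component_P_xi_along_zeta_prime_general
    (I : Set ℝ) (hI : IsOpen I)
    (ω : ℝ → EuclideanSpace ℝ (Fin 3))
    (P : ℝ → Matrix (Fin 3) (Fin 3) ℝ)
    (hω : ContDiffOn ℝ 2 ω I)
    (hω'0 : ∀ t ∈ I, deriv ω t ≠ 0)
    (hODE : ∀ t ∈ I, deriv (deriv ω) t = -(Matrix.toEuclideanLin (P t) (ω t))) :
    ∀ t ∈ I,
      ⟪(‖deriv (fun s => (‖deriv ω s‖)⁻¹ • deriv ω s) t‖)⁻¹
          • deriv (fun s => (‖deriv ω s‖)⁻¹ • deriv ω s) t,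
        Matrix.toEuclideanLin (P t) ((‖ω t‖)⁻¹ • ω t)⟫
      = -(‖deriv ω t‖ / ‖ω t‖)
          * ‖deriv (fun s => (‖deriv ω s‖)⁻¹ • deriv ω s) t‖ := by
  intro t ht
  have hI_nhds : I ∈ 𝓝 t := hI.mem_nhds ht
  have hω' : DifferentiableAt ℝ (deriv ω) t :=
    ((hω.deriv_of_isOpen hI (by norm_num)).contDiffAt hI_nhds).differentiableAt one_ne_zero
  have hPξ : Matrix.toEuclideanLin (P t) (‖ω t‖⁻¹ • ω t) = -(‖ω t‖⁻¹ • deriv (deriv ω) t) := by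
    rw [map_smul, hODE t ht, smul_neg, neg_neg]
  rw [hPξ, inner_neg_right, real_inner_smul_left, real_inner_smul_right,
    inner_deriv_inv_norm_smul_deriv hω' (eventually_of_mem hI_nhds hω'0)]
  set ζ' := deriv (fun s => (‖deriv ω s‖)⁻¹ • deriv ω s) t
  obtain hζ' | hζ' := eq_or_ne ‖ζ'‖ 0
  · simp [hζ']
  · field_simp

theorem component_P_xi_along_zeta_prime
    (I : Set ℝ) (hI : IsOpen I)
    (ω : ℝ → EuclideanSpace ℝ (Fin 3))
    (P : ℝ → Matrix (Fin 3) (Fin 3) ℝ)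
    (hω : ContDiffOn ℝ 2 ω I)
    (hP : ContinuousOn P I)
    (hω0 : ∀ t ∈ I, ω t ≠ 0)
    (hω'0 : ∀ t ∈ I, deriv ω t ≠ 0)
    (hζ'0 : ∀ t ∈ I, deriv (fun s => (‖deriv ω s‖)⁻¹ • deriv ω s) t ≠ 0)
    (hODE : ∀ t ∈ I, deriv (deriv ω) t = -(Matrix.toEuclideanLin (P t) (ω t))) :
    ∀ t ∈ I,
      ⟪(‖deriv (fun s => (‖deriv ω s‖)⁻¹ • deriv ω s) t‖)⁻¹
          • deriv (fun s => (‖deriv ω s‖)⁻¹ • deriv ω s) t,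
        Matrix.toEuclideanLin (P t) ((‖ω t‖)⁻¹ • ω t)⟫
      = -(‖deriv ω t‖ / ‖ω t‖)
          * ‖deriv (fun s => (‖deriv ω s‖)⁻¹ • deriv ω s) t‖ :=
  component_P_xi_along_zeta_prime_general I hI ω P hω hω'0 hODE
end

section
/- Let y : [0,T] → ℝ be C¹ and nonnegative, and suppose y(t) ≤ A + Bt + ∫_0^t ∫_0^s β(τ) y(τ) dτ ds for all t ∈ [0,T], where A, B ≥ 0 and β ≥ 0 is continuous. Then y(t) ≤ (A + Bt) exp(∫_0^t ∫_0^s β(τ) dτ ds) for all t ∈ [0,T]. -/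
/-!
Put `z t = A + B t + ∫₀ᵗ ∫₀ˢ β y`, so that `y ≤ z`, and `z` is nondecreasing because `β y ≥ 0`.
Then `∫₀ᵗ β y ≤ G t * z t` with `G t = ∫₀ᵗ β`, i.e. `z' ≤ B + G z`, and for this linear
differential inequality `z t * exp (-∫₀ᵗ G) - B t` is nonincreasing (using `∫₀ᵗ G ≥ 0`),
which gives `z t ≤ (A + B t) * exp (∫₀ᵗ G)`.
-/

open Set intervalIntegral

section Primitive

variable {E : Type*} [NormedAddCommGroup E] [NormedSpace ℝ E]
  {f : ℝ → E} {a b : ℝ}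

theorem ContinuousOn.continuousOn_intervalIntegral (hf : ContinuousOn f (Icc a b)) :
    ContinuousOn (fun t => ∫ s in a..t, f s) (Icc a b) := by
  rcases le_or_gt a b with hab | hba
  · rw [← uIcc_of_le hab] at hf ⊢
    exact continuousOn_primitive_interval (hf.integrableOn_compact isCompact_uIcc)
  · simp [Icc_eq_empty_of_lt hba]

theorem ContinuousOn.hasDerivAt_intervalIntegral [CompleteSpace E]
    (hf : ContinuousOn f (Icc a b)) {x : ℝ} (hx : x ∈ Ioo a b) : HasDerivAt (fun t => ∫ s in a..t, f s) (f x) x := by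
  refine integral_hasDerivAt_right ?_ ?_ (hf.continuousAt (Icc_mem_nhds hx.1 hx.2))
  · refine (hf.mono ?_).intervalIntegrable
    rw [uIcc_of_le hx.1.le]
    exact Icc_subset_Icc_right hx.2.le
  · exact (hf.mono Ioo_subset_Icc_self).stronglyMeasurableAtFilter isOpen_Ioo x hx

end Primitive

section Real

variable {a b : ℝ}

theorem monotoneOn_intervalIntegral_of_nonneg {f : ℝ → ℝ} (hf : ContinuousOn f (Icc a b))
    (hf0 : ∀ x ∈ Icc a b, 0 ≤ f x) : MonotoneOn (fun t => ∫ s in a..t, f s) (Icc a b) := by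
  intro x hx y hy hxy
  dsimp only
  have hint : ∀ c d, c ∈ Icc a b → d ∈ Icc a b → IntervalIntegrable f MeasureTheory.volume c d :=
    fun c d hc hd => (hf.mono (uIcc_subset_Icc hc hd)).intervalIntegrable
  rw [← integral_add_adjacent_intervals (hint a x (left_mem_Icc.2 (hx.1.trans hx.2)) hx)
    (hint x y hx hy)]
  exact le_add_of_nonneg_right
    (integral_nonneg hxy fun s hs => hf0 s ⟨hx.1.trans hs.1, hs.2.trans hy.2⟩)

theorem intervalIntegral_mul_le_mul_of_le_monotoneOn {β y z : ℝ → ℝ}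
    (hβ : ContinuousOn β (Icc a b)) (hy : ContinuousOn y (Icc a b))
    (hβ0 : ∀ x ∈ Icc a b, 0 ≤ β x) (hyz : ∀ x ∈ Icc a b, y x ≤ z x)
    (hz : MonotoneOn z (Icc a b)) {t : ℝ} (ht : t ∈ Icc a b) :
    ∫ s in a..t, β s * y s ≤ (∫ s in a..t, β s) * z t := by
  have hsub : uIcc a t ⊆ Icc a b := by
    rw [uIcc_of_le ht.1]
    exact Icc_subset_Icc_right ht.2
  rw [← integral_mul_const]
  refine integral_mono_on ht.1 ((hβ.mul hy).mono hsub).intervalIntegrable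
    ((hβ.mul continuousOn_const).mono hsub).intervalIntegrable fun s hs => ?_
  have hs' : s ∈ Icc a b := ⟨hs.1, hs.2.trans ht.2⟩
  exact mul_le_mul_of_nonneg_left ((hyz s hs').trans (hz hs' ht hs.2)) (hβ0 s hs')

theorem le_mul_exp_of_hasDerivAt_le_add_mul {B : ℝ} {z z' E G : ℝ → ℝ} (hB : 0 ≤ B)
    (hzc : ContinuousOn z (Icc a b)) (hEc : ContinuousOn E (Icc a b))
    (hz : ∀ x ∈ Ioo a b, HasDerivAt z (z' x) x) (hE : ∀ x ∈ Ioo a b, HasDerivAt E (G x) x)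
    (hEa : ∀ x ∈ Ioo a b, E a ≤ E x) (hle : ∀ x ∈ Ioo a b, z' x ≤ B + G x * z x)
    {t : ℝ} (ht : t ∈ Icc a b) :
    z t ≤ (z a + B * (t - a)) * Real.exp (E t - E a) := by
  set φ := fun t => z t * Real.exp (-(E t - E a)) - B * (t - a)
  have hφ : AntitoneOn φ (Icc a b) := by
    refine antitoneOn_of_hasDerivWithinAt_nonpos (convex_Icc a b)
      (f' := fun x => (z' x - G x * z x) * Real.exp (-(E x - E a)) - B) ?_ ?_ ?_
    · fun_prop
    · rw [interior_Icc]
      intro x hx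
      have hexp : HasDerivAt (fun x => Real.exp (-(E x - E a)))
          (Real.exp (-(E x - E a)) * -G x) x := ((hE x hx).sub_const (E a)).neg.exp
      have hlin := ((hasDerivAt_id x).sub_const a).const_mul B
      exact (((hz x hx).mul hexp).sub hlin).hasDerivWithinAt.congr_deriv (by ring)
    · rw [interior_Icc]
      intro x hx
      have hexp_le : Real.exp (-(E x - E a)) ≤ 1 :=
        Real.exp_le_one_iff.2 (by linarith [hEa x hx])
      calc (z' x - G x * z x) * Real.exp (-(E x - E a)) - B
          ≤ B * Real.exp (-(E x - E a)) - B := by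
            gcongr
            linarith [hle x hx]
        _ ≤ B * 1 - B := by gcongr
        _ = 0 := by ring
  have hφt : z t * Real.exp (-(E t - E a)) ≤ z a + B * (t - a) := by
    simpa [φ] using hφ (left_mem_Icc.2 (ht.1.trans ht.2)) ht ht.1
  calc z t = z t * Real.exp (-(E t - E a)) * Real.exp (E t - E a) := by
        rw [mul_assoc, ← Real.exp_add, neg_add_cancel, Real.exp_zero, mul_one]
    _ ≤ (z a + B * (t - a)) * Real.exp (E t - E a) := by gcongr

end Real

theorem iterated_gronwall_affine_general
    (T A B : ℝ) (hB : 0 ≤ B)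
    (y β : ℝ → ℝ)
    (hy : ContDiffOn ℝ 1 y (Set.Icc 0 T))
    (hy0 : ∀ t ∈ Set.Icc 0 T, 0 ≤ y t)
    (hβ : ContinuousOn β (Set.Icc 0 T))
    (hβ0 : ∀ t ∈ Set.Icc 0 T, 0 ≤ β t)
    (h : ∀ t ∈ Set.Icc 0 T,
      y t ≤ A + B * t + ∫ s in (0:ℝ)..t, ∫ τ in (0:ℝ)..s, β τ * y τ) :
    ∀ t ∈ Set.Icc 0 T,
      y t ≤ (A + B * t) * Real.exp (∫ s in (0:ℝ)..t, ∫ τ in (0:ℝ)..s, β τ) := by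
  set g := fun s => ∫ τ in (0:ℝ)..s, β τ * y τ
  set G := fun s => ∫ τ in (0:ℝ)..s, β τ
  set z := fun t => A + B * t + ∫ s in (0:ℝ)..t, g s
  have hg : ContinuousOn g (Icc 0 T) := (hβ.mul hy.continuousOn).continuousOn_intervalIntegral
  have hG : ContinuousOn G (Icc 0 T) := hβ.continuousOn_intervalIntegral
  have hz_mono : MonotoneOn z (Icc 0 T) := by
    refine MonotoneOn.add (fun u _ v _ huv => by gcongr) (monotoneOn_intervalIntegral_of_nonneg hg
      fun s hs => integral_nonneg hs.1 fun τ hτ => ?_)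
    have hτ' : τ ∈ Icc 0 T := ⟨hτ.1, hτ.2.trans hs.2⟩
    exact mul_nonneg (hβ0 τ hτ') (hy0 τ hτ')
  have hG0 : ∀ x ∈ Icc 0 T, 0 ≤ G x := fun x hx =>
    integral_nonneg hx.1 fun τ hτ => hβ0 τ ⟨hτ.1, hτ.2.trans hx.2⟩
  have hz' : ∀ x ∈ Ioo 0 T, HasDerivAt z (B + g x) x := fun x hx =>
    (((hasDerivAt_id x).const_mul B).const_add A).add (hg.hasDerivAt_intervalIntegral hx)
      |>.congr_deriv (by simp)
  have hgz : ∀ x ∈ Ioo 0 T, B + g x ≤ B + G x * z x := fun x hx => by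
    have := intervalIntegral_mul_le_mul_of_le_monotoneOn hβ hy.continuousOn hβ0 h hz_mono
      (Ioo_subset_Icc_self hx)
    linarith
  intro t ht
  refine (h t ht).trans ?_
  simpa [z] using le_mul_exp_of_hasDerivAt_le_add_mul hB
    ((continuousOn_const.add (continuousOn_const.mul continuousOn_id)).add
      hg.continuousOn_intervalIntegral)
    hG.continuousOn_intervalIntegral hz' (fun x hx => hG.hasDerivAt_intervalIntegral hx)
    (fun x hx => monotoneOn_intervalIntegral_of_nonneg hG hG0
      ⟨le_rfl, hx.1.le.trans hx.2.le⟩ (Ioo_subset_Icc_self hx) hx.1.le)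
    hgz ht

theorem iterated_gronwall_affine
    (T A B : ℝ) (hT : 0 < T) (hA : 0 ≤ A) (hB : 0 ≤ B)
    (y β : ℝ → ℝ)
    (hy : ContDiffOn ℝ 1 y (Set.Icc 0 T))
    (hy0 : ∀ t ∈ Set.Icc 0 T, 0 ≤ y t)
    (hβ : ContinuousOn β (Set.Icc 0 T))
    (hβ0 : ∀ t ∈ Set.Icc 0 T, 0 ≤ β t)
    (h : ∀ t ∈ Set.Icc 0 T,
      y t ≤ A + B * t + ∫ s in (0:ℝ)..t, ∫ τ in (0:ℝ)..s, β τ * y τ) :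
    ∀ t ∈ Set.Icc 0 T,
      y t ≤ (A + B * t) * Real.exp (∫ s in (0:ℝ)..t, ∫ τ in (0:ℝ)..s, β τ) :=
  iterated_gronwall_affine_general T A B hB y β hy hy0 hβ hβ0 h
end
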